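/- arXiv:2304.02156 — 9 statements merged into one kernel-verified Lean document; each statement's English description precedes it below -/
import Mathlib

section
/- For every heterogeneous quorum system 𝓠 and every set of processes P: if the minimal quorums of 𝓠 have quorum intersection at P (every pair of minimal quorums intersects in a process of P), then 𝓠 is consistent at P. -/
open Finset

/-- A heterogeneous quorum system on the (finite) set of processes `α`:
each process is assigned a nonempty antichain of nonempty finite sets of
processes, its individual minimal quorums. -/
structure HQS (α : Type*) where
  /-- the individual minimal quorums of each process -/
  Q : α → Finset (Finset α)
  Q_nonempty : ∀ p, (Q p).Nonempty
  quorum_nonempty : ∀ p, ∀ q ∈ Q p, q.Nonempty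
  antichain : ∀ p, ∀ q ∈ Q p, ∀ q' ∈ Q p, ¬ q ⊂ q'

variable {α : Type*}

/-- `q` is a quorum of the system: an individual minimal quorum of some process. -/
def HQS.IsQuorum (S : HQS α) (q : Finset α) : Prop := ∃ p, q ∈ S.Q p

/-- `q` is a minimal quorum of the system: a quorum no proper subset of which
is a quorum. -/
def HQS.IsMinimalQuorum (S : HQS α) (q : Finset α) : Prop :=
  S.IsQuorum q ∧ ∀ q' ⊂ q, ¬ S.IsQuorum q'

/-- Edge of the quorum graph: `p` has `p'` in one of its individual minimal quorums. -/
def HQS.Edge (S : HQS α) (p p' : α) : Prop := ∃ q ∈ S.Q p, p' ∈ q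

/-- Reachability by a directed path in the quorum graph. -/
def HQS.Reach (S : HQS α) : α → α → Prop := Relation.ReflTransGen S.Edge

/-- Two vertices are in the same strongly connected component. -/
def HQS.SameSCC (S : HQS α) (p p' : α) : Prop := S.Reach p p' ∧ S.Reach p' p

/-- `C` is a strongly connected component of the quorum graph. -/
def HQS.IsSCC (S : HQS α) (C : Set α) : Prop := ∃ v, C = {u | S.SameSCC u v}

/-- `C` is a sink component: an SCC such that every edge leaving a vertex of `C`
ends in `C`. -/
def HQS.IsSinkComponent (S : HQS α) (C : Set α) : Prop :=
  S.IsSCC C ∧ ∀ p ∈ C, ∀ p', S.Edge p p' → p' ∈ C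

/-- if the minimal quorums of 𝓠 have quorum intersection at P,
then 𝓠 is consistent at P. -/
theorem stmt_2 [Fintype α] [DecidableEq α] (S : HQS α) (𝓦 P : Finset α)
    (h : ∀ q q' : Finset α, S.IsMinimalQuorum q → S.IsMinimalQuorum q' →
        (q ∩ q' ∩ P).Nonempty) :
    ∀ p ∈ 𝓦, ∀ p' ∈ 𝓦, ∀ q ∈ S.Q p, ∀ q' ∈ S.Q p', (q ∩ q' ∩ P).Nonempty := by
  have key : ∀ q : Finset α, S.IsQuorum q → ∃ m, m ⊆ q ∧ S.IsMinimalQuorum m := by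
    intro q
    induction q using Finset.strongInduction with
    | _ q ih =>
      intro hq
      by_cases hmin : ∀ q' ⊂ q, ¬ S.IsQuorum q'
      · exact ⟨q, subset_rfl, hq, hmin⟩
      · push_neg at hmin
        obtain ⟨q', hss, hq'⟩ := hmin
        obtain ⟨m, hm, hmin⟩ := ih q' hss hq'
        exact ⟨m, hm.trans hss.subset, hmin⟩
  intro p _ p' _ q hq q' hq'
  obtain ⟨m, hm, hmmin⟩ := key q ⟨p, hq⟩
  obtain ⟨m', hm', hm'min⟩ := key q' ⟨p', hq'⟩
  obtain ⟨x, hx⟩ := h m m' hmmin hm'min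
  simp only [Finset.mem_inter] at hx
  exact ⟨x, by simp only [Finset.mem_inter]; exact ⟨⟨hm hx.1.1, hm' hx.1.2⟩, hx.2⟩⟩
end

section
/- Assume the heterogeneous quorum system 𝓠 has quorum sharing and global quorum intersection at 𝓦. Then a quorum q of 𝓠 is a minimal quorum of 𝓠 if and only if q is an individual minimal quorum of every one of its well-behaved members, i.e., q ∈ 𝓠(p) for every p ∈ q ∩ 𝓦. -/
open Finset

variable {α : Type*}

/-- under quorum sharing and global quorum intersection at 𝓦, a
quorum q of 𝓠 is a minimal quorum iff it is an individual minimal quorum of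
every one of its well-behaved members. -/
theorem stmt_6 [Fintype α] [DecidableEq α] (S : HQS α) (𝓦 : Finset α)
    (hshare : ∀ p : α, ∀ q ∈ S.Q p, ∀ p' ∈ q, ∃ q' ∈ S.Q p', q' ⊆ q)
    (hinter : ∀ q q' : Finset α, S.IsQuorum q → S.IsQuorum q' →
        (q ∩ q' ∩ 𝓦).Nonempty)
    (q : Finset α) (hq : S.IsQuorum q) :
    S.IsMinimalQuorum q ↔ ∀ p ∈ q ∩ 𝓦, q ∈ S.Q p := by
  constructor
  · rintro ⟨⟨p₀, hp₀⟩, hmin⟩ p hp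
    obtain ⟨hpq, -⟩ := Finset.mem_inter.1 hp
    obtain ⟨q', hq', hsub⟩ := hshare p₀ q hp₀ p hpq
    rcases eq_or_lt_of_le hsub with rfl | hlt
    · exact hq'
    · exact absurd ⟨p, hq'⟩ (hmin q' hlt)
  · intro h
    refine ⟨hq, fun q' hq'sub hq'quorum => ?_⟩
    obtain ⟨w, hw⟩ := hinter q' q' hq'quorum hq'quorum
    rw [Finset.mem_inter, Finset.mem_inter] at hw
    obtain ⟨⟨hwq', -⟩, hwW⟩ := hw
    have hwq : q ∈ S.Q w := h w (Finset.mem_inter.2 ⟨hq'sub.subset hwq', hwW⟩)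
    obtain ⟨p₁, hp₁⟩ := hq'quorum
    obtain ⟨q'', hq'', hsub⟩ := hshare p₁ q' hp₁ w hwq'
    exact S.antichain w q'' hq'' q hwq (lt_of_le_of_lt hsub hq'sub)
end

section
/- Assume the heterogeneous quorum system 𝓠 has quorum sharing and global quorum intersection at 𝓦. Then the well-behaved processes of the minimal quorums of 𝓠 induce a strongly connected subgraph of the quorum graph: for any minimal quorums q₁, q₂ of 𝓠 and any p₁ ∈ q₁ ∩ 𝓦 and p₂ ∈ q₂ ∩ 𝓦, there is a directed path from p₁ to p₂ in the quorum graph all of whose vertices are well-behaved members of minimal quorums of 𝓠. -/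
open Finset

variable {α : Type*}

/-- under quorum sharing and global quorum intersection at 𝓦, the
well-behaved processes of minimal quorums induce a strongly connected subgraph
of the quorum graph: between any two of them there is a directed path all of
whose vertices are well-behaved members of minimal quorums. -/
theorem stmt_9 [Fintype α] [DecidableEq α] (S : HQS α) (𝓦 : Finset α)
    (hshare : ∀ p : α, ∀ q ∈ S.Q p, ∀ p' ∈ q, ∃ q' ∈ S.Q p', q' ⊆ q)
    (hinter : ∀ q q' : Finset α, S.IsQuorum q → S.IsQuorum q' →
        (q ∩ q' ∩ 𝓦).Nonempty)
    (q₁ q₂ : Finset α) (h₁ : S.IsMinimalQuorum q₁) (h₂ : S.IsMinimalQuorum q₂)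
    (p₁ p₂ : α) (hp₁ : p₁ ∈ q₁ ∩ 𝓦) (hp₂ : p₂ ∈ q₂ ∩ 𝓦) :
    Relation.ReflTransGen
      (fun a b => S.Edge a b ∧
        (a ∈ 𝓦 ∧ ∃ m : Finset α, S.IsMinimalQuorum m ∧ a ∈ m) ∧
        (b ∈ 𝓦 ∧ ∃ m : Finset α, S.IsMinimalQuorum m ∧ b ∈ m))
      p₁ p₂ := by
  have key : ∀ q : Finset α, S.IsMinimalQuorum q → ∀ p ∈ q, q ∈ S.Q p := by
    intro q hq p hp
    obtain ⟨p0, hp0⟩ := hq.1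
    obtain ⟨q', hq', hsub⟩ := hshare p0 q hp0 p hp
    have : q' = q := by
      by_contra hne
      exact hq.2 q' (Finset.ssubset_iff_subset_ne.mpr ⟨hsub, hne⟩) ⟨p, hq'⟩
    rwa [this] at hq'
  obtain ⟨r, hr⟩ := hinter q₁ q₂ h₁.1 h₂.1
  simp only [Finset.mem_inter] at hr hp₁ hp₂
  have hr1 := hr.1.1; have hr2 := hr.1.2; have hrW := hr.2
  refine Relation.ReflTransGen.head ⟨⟨q₁, key q₁ h₁ p₁ hp₁.1, hr1⟩,
    ⟨hp₁.2, q₁, h₁, hp₁.1⟩, ⟨hrW, q₁, h₁, hr1⟩⟩ ?_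
  exact Relation.ReflTransGen.single ⟨⟨q₂, key q₂ h₂ r hr2, hp₂.1⟩,
    ⟨hrW, q₂, h₂, hr2⟩, ⟨hp₂.2, q₂, h₂, hp₂.1⟩⟩
end

section
/- Assume 𝓟 is nonempty and the heterogeneous quorum system 𝓠 has quorum sharing and global quorum intersection at 𝓦. Then there is a strongly connected component C of the quorum graph that is a sink component and contains every well-behaved process belonging to any minimal quorum of 𝓠. -/
open Finset

variable {α : Type*}

/-- assuming 𝓟 nonempty, quorum sharing and global quorum
intersection at 𝓦, there is a sink SCC of the quorum graph containing every
well-behaved process that belongs to a minimal quorum. -/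
theorem stmt_10 [Fintype α] [DecidableEq α] [Nonempty α] (S : HQS α) (𝓦 : Finset α)
    (hshare : ∀ p : α, ∀ q ∈ S.Q p, ∀ p' ∈ q, ∃ q' ∈ S.Q p', q' ⊆ q)
    (hinter : ∀ q q' : Finset α, S.IsQuorum q → S.IsQuorum q' →
        (q ∩ q' ∩ 𝓦).Nonempty) :
    ∃ C : Set α, S.IsSinkComponent C ∧
      ∀ p ∈ 𝓦, (∃ m : Finset α, S.IsMinimalQuorum m ∧ p ∈ m) → p ∈ C := by
  classical
  -- every quorum contains a minimal quorum
  have hmin : ∀ q : Finset α, S.IsQuorum q → ∃ m, m ⊆ q ∧ S.IsMinimalQuorum m := by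
    intro q hq
    have key : ∀ n (q : Finset α), q.card ≤ n → S.IsQuorum q →
        ∃ m, m ⊆ q ∧ S.IsMinimalQuorum m := by
      intro n
      induction n with
      | zero =>
        intro q hc hq
        exact absurd (Finset.card_pos.mpr (by
          obtain ⟨p, hp⟩ := hq; exact S.quorum_nonempty p q hp)) (by omega)
      | succ n ih =>
        intro q hc hq
        by_cases h : ∀ q' ⊂ q, ¬ S.IsQuorum q'
        · exact ⟨q, subset_rfl, hq, h⟩
        · push_neg at h
          obtain ⟨q', hss, hq'⟩ := h
          obtain ⟨m, hm1, hm2⟩ := ih q' (by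
            have := Finset.card_lt_card hss; omega) hq'
          exact ⟨m, hm1.trans hss.subset, hm2⟩
    exact key q.card q le_rfl hq
  -- members of a minimal quorum have it as their own quorum
  have hmem : ∀ m : Finset α, S.IsMinimalQuorum m → ∀ u ∈ m, m ∈ S.Q u := by
    intro m hm u hu
    obtain ⟨⟨p, hp⟩, hminimal⟩ := hm
    obtain ⟨q', hq'1, hq'2⟩ := hshare p m hp u hu
    rcases eq_or_ne q' m with rfl | hne
    · exact hq'1
    · exact absurd ⟨u, hq'1⟩ (hminimal q' (lt_of_le_of_ne hq'2 hne))
  -- a minimal quorum exists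
  obtain ⟨p0⟩ : Nonempty α := inferInstance
  obtain ⟨q0, hq0⟩ := S.Q_nonempty p0
  obtain ⟨m0, _, hm0⟩ := hmin q0 ⟨p0, hq0⟩
  obtain ⟨w, hw⟩ : m0.Nonempty := by
    obtain ⟨p, hp⟩ := hm0.1; exact S.quorum_nonempty p m0 hp
  -- any two members of minimal quorums are in the same SCC
  have hscc : ∀ m m' : Finset α, S.IsMinimalQuorum m → S.IsMinimalQuorum m' →
      ∀ u ∈ m, ∀ v ∈ m', S.Reach u v := by
    intro m m' hm hm' u hu v hv
    obtain ⟨x, hx⟩ := hinter m m' hm.1 hm'.1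
    simp only [Finset.mem_inter] at hx
    have e1 : S.Edge u x := ⟨m, hmem m hm u hu, hx.1.1⟩
    have e2 : S.Edge x v := ⟨m', hmem m' hm' x hx.1.2, hv⟩
    exact (Relation.ReflTransGen.single e1).trans (Relation.ReflTransGen.single e2)
  refine ⟨{u | S.SameSCC u w}, ⟨⟨w, rfl⟩, ?_⟩, ?_⟩
  · -- sink
    intro p hp p' hpp'
    obtain ⟨q, hq, hp'q⟩ := hpp'
    obtain ⟨q', hq'1, hq'2⟩ := hshare p q hq p' hp'q
    obtain ⟨m, hm1, hm2⟩ := hmin q' ⟨p', hq'1⟩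
    obtain ⟨u, hu⟩ : m.Nonempty := by
      obtain ⟨r, hr⟩ := hm2.1; exact S.quorum_nonempty r m hr
    constructor
    · -- p' reaches w
      have e : S.Edge p' u := ⟨q', hq'1, hm1 hu⟩
      exact (Relation.ReflTransGen.single e).trans (hscc m m0 hm2 hm0 u hu w hw)
    · -- w reaches p'
      exact hp.2.trans (Relation.ReflTransGen.single ⟨q, hq, hp'q⟩)
  · intro p _ ⟨m, hm, hpm⟩
    exact ⟨hscc m m0 hm hm0 p hpm w hw, hscc m0 m hm0 hm w hw p hpm⟩
end

section
/- In every heterogeneous quorum system 𝓠, every sink component of the quorum graph contains a minimal quorum: if S is a sink component, then there exists a minimal quorum m of 𝓠 with m ⊆ S. -/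
open Finset

variable {α : Type*}

/-- every sink component of the quorum graph contains a minimal
quorum. -/
theorem stmt_11 [Fintype α] [DecidableEq α] (S : HQS α)
    (C : Set α) (hC : S.IsSinkComponent C) :
    ∃ m : Finset α, S.IsMinimalQuorum m ∧ ↑m ⊆ C := by
  classical
  obtain ⟨⟨v, hv⟩, hsink⟩ := hC
  have hvC : v ∈ C := by
    rw [hv]
    exact ⟨Relation.ReflTransGen.refl, Relation.ReflTransGen.refl⟩
  -- pick a quorum of v, contained in C
  obtain ⟨q0, hq0⟩ := S.Q_nonempty v
  have hq0C : ↑q0 ⊆ C := by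
    intro x hx
    exact hsink v hvC x ⟨q0, hq0, hx⟩
  -- strong induction on card to find a minimal quorum inside C
  suffices H : ∀ n (q : Finset α), q.card = n → S.IsQuorum q → ↑q ⊆ C →
      ∃ m : Finset α, S.IsMinimalQuorum m ∧ ↑m ⊆ C by
    exact H q0.card q0 rfl ⟨v, hq0⟩ hq0C
  intro n
  induction n using Nat.strong_induction_on with
  | _ n ih =>
    intro q hcard hq hqC
    by_cases h : ∃ q' ⊂ q, S.IsQuorum q'
    · obtain ⟨q', hq'sub, hq'⟩ := h
      exact ih q'.card (hcard ▸ Finset.card_lt_card hq'sub) q' rfl hq'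
        (fun x hx => hqC (hq'sub.subset hx))
    · push_neg at h
      exact ⟨q, ⟨hq, h⟩, hqC⟩
end

section
/- Assume the heterogeneous quorum system 𝓠 has global quorum intersection at 𝓦. Then the quorum graph of 𝓠 has at most one sink component: any two sink components of the quorum graph are equal. -/
open Finset

variable {α : Type*}

/-- under global quorum intersection at 𝓦, the quorum graph has
at most one sink component. -/
theorem stmt_12 [Fintype α] [DecidableEq α] (S : HQS α) (𝓦 : Finset α)
    (hinter : ∀ q q' : Finset α, S.IsQuorum q → S.IsQuorum q' →
        (q ∩ q' ∩ 𝓦).Nonempty)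
    (C₁ C₂ : Set α) (h₁ : S.IsSinkComponent C₁) (h₂ : S.IsSinkComponent C₂) :
    C₁ = C₂ := by
  obtain ⟨⟨v₁, hv₁⟩, hsink₁⟩ := h₁
  obtain ⟨⟨v₂, hv₂⟩, hsink₂⟩ := h₂
  have hv₁C : v₁ ∈ C₁ := by
    rw [hv₁]; exact ⟨Relation.ReflTransGen.refl, Relation.ReflTransGen.refl⟩
  have hv₂C : v₂ ∈ C₂ := by
    rw [hv₂]; exact ⟨Relation.ReflTransGen.refl, Relation.ReflTransGen.refl⟩
  obtain ⟨q₁, hq₁⟩ := S.Q_nonempty v₁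
  obtain ⟨q₂, hq₂⟩ := S.Q_nonempty v₂
  obtain ⟨x, hx⟩ := hinter q₁ q₂ ⟨v₁, hq₁⟩ ⟨v₂, hq₂⟩
  simp only [Finset.mem_inter] at hx
  have hxC₁ : x ∈ C₁ := hsink₁ v₁ hv₁C x ⟨q₁, hq₁, hx.1.1⟩
  have hxC₂ : x ∈ C₂ := hsink₂ v₂ hv₂C x ⟨q₂, hq₂, hx.1.2⟩
  rw [hv₁] at hxC₁; rw [hv₂] at hxC₂
  obtain ⟨hr₁, hr₁'⟩ := hxC₁
  obtain ⟨hr₂, hr₂'⟩ := hxC₂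
  rw [hv₁, hv₂]
  ext u
  constructor
  · rintro ⟨hu, hu'⟩
    exact ⟨hu.trans (hr₁'.trans hr₂), (hr₂'.trans hr₁).trans hu'⟩
  · rintro ⟨hu, hu'⟩
    exact ⟨hu.trans (hr₂'.trans hr₁), (hr₁'.trans hr₂).trans hu'⟩
end

section
/- Assume 𝓟 is nonempty and the heterogeneous quorum system 𝓠 has quorum sharing and global quorum intersection at 𝓦. Then the quorum graph of 𝓠 has exactly one sink component S, and every well-behaved process belonging to any minimal quorum of 𝓠 lies in S. -/
open Finset

variable {α : Type*}

/-- assuming 𝓟 nonempty, quorum sharing and global quorum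
intersection at 𝓦, the quorum graph has exactly one sink component, and it
contains every well-behaved process of every minimal quorum. -/
theorem stmt_13 [Fintype α] [DecidableEq α] [Nonempty α] (S : HQS α) (𝓦 : Finset α)
    (hshare : ∀ p : α, ∀ q ∈ S.Q p, ∀ p' ∈ q, ∃ q' ∈ S.Q p', q' ⊆ q)
    (hinter : ∀ q q' : Finset α, S.IsQuorum q → S.IsQuorum q' →
        (q ∩ q' ∩ 𝓦).Nonempty) :
    ∃ C : Set α, S.IsSinkComponent C ∧
      (∀ C' : Set α, S.IsSinkComponent C' → C' = C) ∧
      ∀ p ∈ 𝓦, (∃ m : Finset α, S.IsMinimalQuorum m ∧ p ∈ m) → p ∈ C := by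
  classical
  obtain ⟨v, -, hvmin⟩ := Finset.exists_min_image (univ : Finset α)
    (fun v => (univ.filter (fun u => S.Reach v u)).card) univ_nonempty
  have hmax : ∀ u, S.Reach v u → S.Reach u v := by
    intro u hu
    have hsub : univ.filter (fun w => S.Reach u w) ⊆ univ.filter (fun w => S.Reach v w) := by
      intro w hw
      simp only [mem_filter, mem_univ, true_and] at hw ⊢
      exact hu.trans hw
    have heq := Finset.eq_of_subset_of_card_le hsub (hvmin u (mem_univ u))
    have hv : v ∈ univ.filter (fun w => S.Reach u w) := by
      rw [heq]
      exact mem_filter.mpr ⟨mem_univ v, Relation.ReflTransGen.refl⟩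
    exact (mem_filter.mp hv).2
  have hsink : ∀ p ∈ ({u | S.SameSCC u v} : Set α), ∀ p', S.Edge p p' →
      p' ∈ ({u | S.SameSCC u v} : Set α) := by
    intro p hp p' he
    have hvp' : S.Reach v p' := hp.2.trans (Relation.ReflTransGen.single he)
    exact ⟨hmax p' hvp', hvp'⟩
  have hquorum_in : ∀ (C' : Set α), S.IsSinkComponent C' →
      ∃ q, S.IsQuorum q ∧ ∀ x ∈ q, x ∈ C' := by
    rintro C' ⟨⟨w, rfl⟩, hs⟩
    obtain ⟨q, hq⟩ := S.Q_nonempty w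
    exact ⟨q, ⟨w, hq⟩, fun x hx =>
      hs w ⟨Relation.ReflTransGen.refl, Relation.ReflTransGen.refl⟩ x ⟨q, hq, hx⟩⟩
  have hmin_edge : ∀ m, S.IsMinimalQuorum m → ∀ x ∈ m, ∀ y ∈ m, S.Edge x y := by
    rintro m ⟨⟨r, hr⟩, hmin⟩ x hx y hy
    obtain ⟨q0, hq0, hsub⟩ := hshare r m hr x hx
    have heq : q0 = m := by
      by_contra hne
      exact hmin q0 (hsub.ssubset_of_ne hne) ⟨x, hq0⟩
    exact ⟨q0, hq0, heq ▸ hy⟩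
  have hCsink : S.IsSinkComponent ({u | S.SameSCC u v} : Set α) := ⟨⟨v, rfl⟩, hsink⟩
  obtain ⟨q, hq, hqC⟩ := hquorum_in _ hCsink
  refine ⟨{u | S.SameSCC u v}, hCsink, ?_, ?_⟩
  · intro C' hC'
    obtain ⟨q', hq', hq'C⟩ := hquorum_in C' hC'
    obtain ⟨w, hw⟩ := hinter q q' hq hq'
    simp only [mem_inter] at hw
    have hwC : S.SameSCC w v := hqC w hw.1.1
    have hwC' := hq'C w hw.1.2
    obtain ⟨⟨v', rfl⟩, -⟩ := hC'
    have hwv' : S.SameSCC w v' := hwC'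
    ext u
    constructor
    · rintro ⟨h1, h2⟩
      exact ⟨(h1.trans hwv'.2).trans hwC.1, (hwC.2.trans hwv'.1).trans h2⟩
    · rintro ⟨h1, h2⟩
      exact ⟨(h1.trans hwC.2).trans hwv'.1, (hwv'.2.trans hwC.1).trans h2⟩
  · rintro p hpW ⟨m, hmmin, hpm⟩
    obtain ⟨w, hw⟩ := hinter m q hmmin.1 hq
    simp only [mem_inter] at hw
    have hwC : S.SameSCC w v := hqC w hw.1.2
    have e1 : S.Edge p w := hmin_edge m hmmin p hpm w hw.1.1
    have e2 : S.Edge w p := hmin_edge m hmmin w hw.1.1 p hpm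
    exact ⟨(Relation.ReflTransGen.single e1).trans hwC.1,
      hwC.2.trans (Relation.ReflTransGen.single e2)⟩
end

section
/- Assume the heterogeneous quorum system 𝓠 has quorum sharing and global quorum intersection at 𝓦, and let p be a process that does not belong to any sink component of the quorum graph. Then every pair of quorums q, q' of 𝓠 satisfies q ∩ q' ∩ (𝓦 ∖ {p}) ≠ ∅. Consequently, a leave operation by p (removing p from the active processes without changing any other process's quorums) or a remove operation by p (deleting one quorum from 𝓠(p)) yields a quorum system whose quorums pairwise intersect at the remaining well-behaved processes 𝓦 ∖ {p}, i.e., preserves consistency. -/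
open Finset

variable {α : Type*}

/-!
Every quorum contains a minimal quorum `r`, and by quorum sharing `r` is
an individual minimal quorum of each of its members. If `p ∈ r`, every process reaches `p`: it has
some quorum, which meets `r` in a process `y`, and `y` points to `p` through `r`. Then the strongly
connected component of `p` is a sink, which is excluded. So both quorums contain minimal quorums
avoiding `p`, and these meet in a well-behaved process, necessarily different from `p`.
-/

namespace HQS

def HasQuorumSharing (S : HQS α) : Prop :=
  ∀ p : α, ∀ q ∈ S.Q p, ∀ p' ∈ q, ∃ q' ∈ S.Q p', q' ⊆ q

def HasQuorumIntersection [DecidableEq α] (S : HQS α) : Prop :=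
  ∀ q q' : Finset α, S.IsQuorum q → S.IsQuorum q' → (q ∩ q').Nonempty

variable {S : HQS α}

theorem exists_isMinimalQuorum_subset {q : Finset α} (hq : S.IsQuorum q) :
    ∃ r ⊆ q, S.IsMinimalQuorum r := by
  obtain ⟨r, hrq, hr, hmin⟩ := exists_minimal_le_of_wellFoundedLT S.IsQuorum q hq
  exact ⟨r, hrq, hr, fun q' hq'r hq' => hq'r.2 (hmin hq' hq'r.1)⟩

theorem IsMinimalQuorum.mem_Q (hshare : S.HasQuorumSharing) {r : Finset α}
    (hr : S.IsMinimalQuorum r) {u : α} (hu : u ∈ r) : r ∈ S.Q u := by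
  obtain ⟨p, hrp⟩ := hr.1
  obtain ⟨q, hqu, hqr⟩ := hshare p r hrp u hu
  obtain rfl : q = r := by
    by_contra hne
    exact hr.2 q (Finset.ssubset_iff_subset_ne.2 ⟨hqr, hne⟩) ⟨u, hqu⟩
  exact hqu

theorem IsMinimalQuorum.reach_of_mem [DecidableEq α] (hshare : S.HasQuorumSharing)
    (hinter : S.HasQuorumIntersection) {r : Finset α} (hr : S.IsMinimalQuorum r) {p : α}
    (hp : p ∈ r) (x : α) : S.Reach x p := by
  obtain ⟨qx, hqx⟩ := S.Q_nonempty x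
  obtain ⟨y, hy⟩ := hinter qx r ⟨x, hqx⟩ hr.1
  rw [mem_inter] at hy
  have hxy : S.Edge x y := ⟨qx, hqx, hy.1⟩
  have hyp : S.Edge y p := ⟨r, hr.mem_Q hshare hy.2, hp⟩
  exact .head hxy (.single hyp)

theorem isSinkComponent_of_forall_reach {p : α} (hreach : ∀ x, S.Reach x p) :
    S.IsSinkComponent {u | S.SameSCC u p} :=
  ⟨⟨p, rfl⟩, fun _ hw x hwx => ⟨hreach x, hw.2.tail hwx⟩⟩

theorem exists_isQuorum_subset_notMem [DecidableEq α] (hshare : S.HasQuorumSharing)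
    (hinter : S.HasQuorumIntersection) {p : α} (hp : ∀ C : Set α, S.IsSinkComponent C → p ∉ C)
    {q : Finset α} (hq : S.IsQuorum q) : ∃ r ⊆ q, S.IsQuorum r ∧ p ∉ r := by
  obtain ⟨r, hrq, hr⟩ := exists_isMinimalQuorum_subset hq
  refine ⟨r, hrq, hr.1, fun hpr => ?_⟩
  exact hp _ (isSinkComponent_of_forall_reach (hr.reach_of_mem hshare hinter hpr))
    ⟨.refl, .refl⟩

end HQS

theorem stmt_14_general [DecidableEq α] (S : HQS α) (𝓦 : Finset α)
    (hshare : ∀ p : α, ∀ q ∈ S.Q p, ∀ p' ∈ q, ∃ q' ∈ S.Q p', q' ⊆ q)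
    (hinter : ∀ q q' : Finset α, S.IsQuorum q → S.IsQuorum q' →
        (q ∩ q' ∩ 𝓦).Nonempty)
    (p : α) (hp : ∀ C : Set α, S.IsSinkComponent C → p ∉ C) :
    ∀ q q' : Finset α, S.IsQuorum q → S.IsQuorum q' →
      (q ∩ q' ∩ (𝓦 \ {p})).Nonempty := by
  have hinter' : S.HasQuorumIntersection := fun q q' hq hq' =>
    (hinter q q' hq hq').mono inter_subset_left
  intro q q' hq hq'
  obtain ⟨r, hrq, hr, hpr⟩ := S.exists_isQuorum_subset_notMem hshare hinter' hp hq
  obtain ⟨r', hrq', hr', -⟩ := S.exists_isQuorum_subset_notMem hshare hinter' hp hq'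
  obtain ⟨z, hz⟩ := hinter r r' hr hr'
  refine ⟨z, ?_⟩
  simp only [mem_inter, mem_sdiff, mem_singleton] at hz ⊢
  exact ⟨⟨hrq hz.1.1, hrq' hz.1.2⟩, hz.2, fun hzp => hpr (hzp ▸ hz.1.1)⟩

/-- under quorum sharing and global quorum intersection at 𝓦, if
process p belongs to no sink component of the quorum graph, then every pair
of quorums of 𝓠 intersects at 𝓦 ∖ {p}; hence leave/remove operations by p
preserve consistency. -/
theorem stmt_14 [Fintype α] [DecidableEq α] (S : HQS α) (𝓦 : Finset α)
    (hshare : ∀ p : α, ∀ q ∈ S.Q p, ∀ p' ∈ q, ∃ q' ∈ S.Q p', q' ⊆ q)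
    (hinter : ∀ q q' : Finset α, S.IsQuorum q → S.IsQuorum q' →
        (q ∩ q' ∩ 𝓦).Nonempty)
    (p : α) (hp : ∀ C : Set α, S.IsSinkComponent C → p ∉ C) :
    ∀ q q' : Finset α, S.IsQuorum q → S.IsQuorum q' →
      (q ∩ q' ∩ (𝓦 \ {p})).Nonempty :=
  stmt_14_general S 𝓦 hshare hinter p hp
end

section
/- Assume 𝓟 is nonempty and the heterogeneous quorum system 𝓠 has quorum sharing and global quorum intersection at 𝓦. Let p_w be a well-behaved member of some minimal quorum of 𝓠, and let p* be a process such that the quorum graph has an edge from p_w to p*. Then p* and p_w lie in the same strongly connected component; in particular, p* belongs to the unique sink component of the quorum graph. -/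
open Finset

variable {α : Type*}

/-- assuming 𝓟 nonempty, quorum sharing and global quorum
intersection at 𝓦, if p_w is a well-behaved member of some minimal quorum and
the quorum graph has an edge from p_w to p*, then p* and p_w are in the same
SCC; in particular p* belongs to the unique sink component. -/
theorem stmt_18 [Fintype α] [DecidableEq α] [Nonempty α] (S : HQS α) (𝓦 : Finset α)
    (hshare : ∀ p : α, ∀ q ∈ S.Q p, ∀ p' ∈ q, ∃ q' ∈ S.Q p', q' ⊆ q)
    (hinter : ∀ q q' : Finset α, S.IsQuorum q → S.IsQuorum q' →
        (q ∩ q' ∩ 𝓦).Nonempty)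
    (pw pstar : α) (hw : pw ∈ 𝓦)
    (hm : ∃ m : Finset α, S.IsMinimalQuorum m ∧ pw ∈ m)
    (hedge : S.Edge pw pstar) :
    S.SameSCC pstar pw ∧ ∀ C : Set α, S.IsSinkComponent C → pstar ∈ C := by
  classical
  obtain ⟨m, ⟨⟨p0, hmq⟩, hmin⟩, hpwm⟩ := hm
  have clique : ∀ a ∈ m, ∀ b ∈ m, S.Edge a b := by
    intro a ha b hb
    obtain ⟨qa, hqa, hsub⟩ := hshare p0 m hmq a ha
    have heq : qa = m := by
      rcases eq_or_ne qa m with h | h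
      · exact h
      · exact absurd ⟨a, hqa⟩ (hmin qa (lt_of_le_of_ne hsub h))
    exact ⟨qa, hqa, heq ▸ hb⟩
  obtain ⟨q, hq, hpsq⟩ := hedge
  obtain ⟨qs, hqs, hqssub⟩ := hshare pw q hq pstar hpsq
  obtain ⟨x, hx⟩ := hinter qs m ⟨pstar, hqs⟩ ⟨p0, hmq⟩
  simp only [mem_inter] at hx
  obtain ⟨⟨hxqs, hxm⟩, -⟩ := hx
  have reach1 : S.Reach pstar pw :=
    Relation.ReflTransGen.head ⟨qs, hqs, hxqs⟩
      (Relation.ReflTransGen.single (clique x hxm pw hpwm))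
  have reach2 : S.Reach pw pstar := Relation.ReflTransGen.single ⟨q, hq, hpsq⟩
  refine ⟨⟨reach1, reach2⟩, ?_⟩
  rintro C ⟨⟨v, rfl⟩, hclosed⟩
  have hvC : v ∈ {u | S.SameSCC u v} :=
    ⟨Relation.ReflTransGen.refl, Relation.ReflTransGen.refl⟩
  obtain ⟨qv, hqv⟩ := S.Q_nonempty v
  obtain ⟨y, hy⟩ := hinter qv m ⟨v, hqv⟩ ⟨p0, hmq⟩
  simp only [mem_inter] at hy
  obtain ⟨⟨hyqv, hym⟩, -⟩ := hy
  have hyC : y ∈ {u | S.SameSCC u v} := hclosed v hvC y ⟨qv, hqv, hyqv⟩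
  obtain ⟨hyv, hvy⟩ := hyC
  have hpwy : S.Reach pw y := Relation.ReflTransGen.single (clique pw hpwm y hym)
  have hypw : S.Reach y pw := Relation.ReflTransGen.single (clique y hym pw hpwm)
  exact ⟨(reach1.trans hpwy).trans hyv, (hvy.trans hypw).trans reach2⟩
end
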